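/- Assume R is q-invariant (R(qx,qy,qz,qu) = R(x,y,z,u) for all x,y,z,u). Then for every x ∈ ℝ⁴: R(x,q²x,qx,q³x) = 0. -/

import Mathlib

noncomputable section

/-- `V` is the model space `ℝ⁴`. -/
abbrev V : Type := Fin 4 → ℝ

/-- The cyclic-shift map `q(x₁,x₂,x₃,x₄) = (x₂,x₃,x₄,x₁)`. -/
def q (x : V) : V := fun i => x (i + 1)

/-- The circulant matrix with rows `(A,B,C,B), (B,A,B,C), (C,B,A,B), (B,C,B,A)`. -/
def G (A B C : ℝ) : Matrix (Fin 4) (Fin 4) ℝ :=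
  !![A, B, C, B; B, A, B, C; C, B, A, B; B, C, B, A]

/-- The bilinear form on `ℝ⁴` whose matrix in the standard basis is `G A B C`. -/
def g (A B C : ℝ) (x y : V) : ℝ :=
  dotProduct x (Matrix.mulVec (G A B C) y)

/-- `x` induces a `q`-basis if `{x, qx, q²x, q³x}` is linearly independent. -/
def inducesQBasis (x : V) : Prop :=
  LinearIndependent ℝ ![x, q x, q (q x), q (q (q x))]

/-- The angle between `a` and `b` measured with respect to `g`. -/
def angle (A B C : ℝ) (a b : V) : ℝ :=
  Real.arccos (g A B C a b / Real.sqrt (g A B C a a * g A B C b b))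

/-- `R` is multilinear (linear in each of its four arguments). -/
def MultilinearR (R : V → V → V → V → ℝ) : Prop :=
  (∀ a a' y z u, R (a + a') y z u = R a y z u + R a' y z u) ∧
  (∀ (c : ℝ) a y z u, R (c • a) y z u = c * R a y z u) ∧
  (∀ x a a' z u, R x (a + a') z u = R x a z u + R x a' z u) ∧
  (∀ (c : ℝ) x a z u, R x (c • a) z u = c * R x a z u) ∧
  (∀ x y a a' u, R x y (a + a') u = R x y a u + R x y a' u) ∧
  (∀ (c : ℝ) x y a u, R x y (c • a) u = c * R x y a u) ∧
  (∀ x y z a a', R x y z (a + a') = R x y z a + R x y z a') ∧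
  (∀ (c : ℝ) x y z a, R x y z (c • a) = c * R x y z a)

/-- `R` has the symmetries of a Riemannian curvature tensor of type `(0,4)`. -/
def CurvSymm (R : V → V → V → V → ℝ) : Prop :=
  (∀ x y z u, R x y z u = - R y x z u) ∧
  (∀ x y z u, R x y z u = - R x y u z) ∧
  (∀ x y z u, R x y z u = R z u x y) ∧
  (∀ x y z u, R x y z u + R y z x u + R z x y u = 0)

/-- The sectional curvature of the plane spanned by `a` and `b`. -/
def mu (A B C : ℝ) (R : V → V → V → V → ℝ) (a b : V) : ℝ :=
  R a b a b / (g A B C a a * g A B C b b - (g A B C a b) ^ 2)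

/-! Since `q⁴ = 1`, `q`-invariance makes `R (x, qx, q²x, q³x)` invariant under rotating its
arguments; in the first Bianchi identity for these four vectors the rotated term then cancels
the first one, leaving `R (q²x, x, qx, q³x) = 0`. -/

lemma q_q_q_q (x : V) : q (q (q (q x))) = x := by
  funext i
  fin_cases i <;> rfl

lemma CurvSymm.apply_swap_eq_zero_of_rotate_eq {R : V → V → V → V → ℝ} (hR : CurvSymm R)
    {a b c d : V} (hrot : R b c d a = R a b c d) : R a c b d = 0 := by
  obtain ⟨hanti₁, hanti₂, -, hbianchi⟩ := hR
  have hbcad : R b c a d = -R a b c d := by rw [hanti₂, hrot]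
  have hcabd : R c a b d = 0 := by linarith [hbianchi a b c d]
  rw [hanti₁, hcabd, neg_zero]

theorem stmt18_general (R : V → V → V → V → ℝ)
    (hsym : CurvSymm R)
    (hq : ∀ x y z u, R (q x) (q y) (q z) (q u) = R x y z u) (x : V) :
    R x (q (q x)) (q x) (q (q (q x))) = 0 := by
  refine hsym.apply_swap_eq_zero_of_rotate_eq ?_
  simpa only [q_q_q_q] using hq x (q x) (q (q x)) (q (q (q x)))

theorem stmt18 (R : V → V → V → V → ℝ)
    (hml : MultilinearR R) (hsym : CurvSymm R)
    (hq : ∀ x y z u, R (q x) (q y) (q z) (q u) = R x y z u) (x : V) :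
    R x (q (q x)) (q x) (q (q (q x))) = 0 :=
  stmt18_general R hsym hq x
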